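/- For a hyperideal I of R, the localization S⁻¹I = { a/s : a ∈ I, s ∈ S } equals S⁻¹R if and only if I ∩ S ≠ ∅. -/
import Mathlib


universe u v

/-- Extension of a set-valued `m`-ary hyperoperation to sets of arguments. -/
def setExt {α : Type u} (f : (ℕ → α) → Set α) (A : ℕ → Set α) : Set α :=
  {r | ∃ x : ℕ → α, (∀ i, x i ∈ A i) ∧ r ∈ f x}

/-- A commutative Krasner `(m,n)`-hyperring with scalar identity `one` and
absorbing element `zero`.  The `m`-ary hyperoperation `f` and the `n`-ary
operation `g` are encoded as functions on `ℕ`-indexed families which only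
depend on the first `m` (resp. `n`) entries. -/
structure KrasnerHyperring (R : Type u) (m n : ℕ) where
  f : (ℕ → R) → Set R
  g : (ℕ → R) → R
  zero : R
  one : R
  neg : R → R
  hm : 2 ≤ m
  hn : 2 ≤ n
  f_congr : ∀ x y : ℕ → R, (∀ i, i < m → x i = y i) → f x = f y
  g_congr : ∀ x y : ℕ → R, (∀ i, i < n → x i = y i) → g x = g y
  f_comm : ∀ (x : ℕ → R) (σ : Equiv.Perm ℕ), (∀ i, m ≤ i → σ i = i) → f (x ∘ σ) = f x
  g_comm : ∀ (x : ℕ → R) (σ : Equiv.Perm ℕ), (∀ i, n ≤ i → σ i = i) → g (x ∘ σ) = g x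
  f_nonempty : ∀ x, (f x).Nonempty
  f_assoc : ∀ (z : ℕ → R) (i j : ℕ), i < m → j < m →
    setExt f (fun k => if k < i then {z k} else if k = i then f (fun l => z (i + l)) else {z (k + m - 1)}) =
    setExt f (fun k => if k < j then {z k} else if k = j then f (fun l => z (j + l)) else {z (k + m - 1)})
  g_assoc : ∀ (z : ℕ → R) (i j : ℕ), i < n → j < n →
    g (fun k => if k < i then z k else if k = i then g (fun l => z (i + l)) else z (k + n - 1)) =
    g (fun k => if k < j then z k else if k = j then g (fun l => z (j + l)) else z (k + n - 1))
  distrib : ∀ (x a : ℕ → R),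
    {r | ∃ u ∈ f x, r = g (fun j => if j = 0 then u else a j)} =
    f (fun k => g (fun j => if j = 0 then x k else a j))
  f_zero : ∀ x : R, f (fun i => if i = 0 then x else zero) = {x}
  g_one : ∀ x : R, g (fun i => if i = 0 then x else one) = x
  g_zero : ∀ (x : ℕ → R) (i : ℕ), i < n → x i = zero → g x = zero
  neg_mem : ∀ x : R, zero ∈ f (fun i => if i = 0 then x else if i = 1 then neg x else zero)
  neg_unique : ∀ x y : R, zero ∈ f (fun i => if i = 0 then x else if i = 1 then y else zero) → y = neg x
  canonical : ∀ (a : R) (y : ℕ → R), a ∈ f y → ∀ i, i < m →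
    y i ∈ f (fun j => if j = i then a else neg (y j))

namespace KrasnerHyperring

variable {R : Type u} {m n : ℕ}

/-- `g(a, b, 1^(n-2))`. -/
def g2 (H : KrasnerHyperring R m n) (a b : R) : R :=
  H.g (fun i => if i = 0 then a else if i = 1 then b else H.one)

/-- `S` is an `n`-ary multiplicative subset. -/
def IsMultSubset (H : KrasnerHyperring R m n) (S : Set R) : Prop :=
  ∀ s : ℕ → R, (∀ i, i < n → s i ∈ S) → H.g s ∈ S

/-- The set `f(g(r,s',1^(n-2)), -g(r',s,1^(n-2)), 0^(m-2))`. -/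
def fracMix (H : KrasnerHyperring R m n) (r s' r' s : R) : Set R :=
  H.f (fun i => if i = 0 then H.g2 r s' else if i = 1 then H.neg (H.g2 r' s) else H.zero)

/-- The fraction relation on `R × S`:
`(r,s) ∼ (r',s')` iff `0 ∈ g(t, f(g(r,s',1^(n-2)), -g(r',s,1^(n-2)), 0^(m-2)), 1^(n-2))`
for some `t ∈ S`. -/
def FracRel (H : KrasnerHyperring R m n) (S : Set R) (p q : R × S) : Prop :=
  ∃ t ∈ S, ∃ u ∈ H.fracMix p.1 (q.2 : R) q.1 (p.2 : R), H.g2 t u = H.zero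

/-- The hyperring of fractions `S⁻¹R` as a quotient of `R × S`. -/
def Frac (H : KrasnerHyperring R m n) (S : Set R) : Type u :=
  Quot (H.FracRel S)

/-- The fraction `r/s`. -/
def mkFrac (H : KrasnerHyperring R m n) (S : Set R) (r s : R) (hs : s ∈ S) : Frac H S :=
  Quot.mk _ (r, ⟨s, hs⟩)

/-- The zero fraction `0/1`. -/
def zeroFrac (H : KrasnerHyperring R m n) {S : Set R} (h1 : H.one ∈ S) : Frac H S :=
  H.mkFrac S H.zero H.one h1

/-- The unit fraction `1/1`. -/
def oneFrac (H : KrasnerHyperring R m n) {S : Set R} (h1 : H.one ∈ S) : Frac H S :=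
  H.mkFrac S H.one H.one h1

/-- The natural map `φ : R → S⁻¹R`, `r ↦ r/1`. -/
def natMap (H : KrasnerHyperring R m n) {S : Set R} (h1 : H.one ∈ S) (r : R) : Frac H S :=
  H.mkFrac S r H.one h1

/-- The `n`-ary multiplication on `S⁻¹R`:
`G(r_1/s_1, ..., r_n/s_n) = g(r_1,...,r_n)/g(s_1,...,s_n)`. -/
noncomputable def fracG (H : KrasnerHyperring R m n) {S : Set R} (hS : H.IsMultSubset S)
    (x : ℕ → Frac H S) : Frac H S :=
  H.mkFrac S (H.g (fun i => ((x i).out).1)) (H.g (fun i => (((x i).out).2 : R)))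
    (hS _ (fun i _ => ((x i).out).2.property))

/-- The denominator `g(s_1,...,s_m,1^(n-m))` of the `m`-ary hypersum. -/
noncomputable def denomF (H : KrasnerHyperring R m n) {S : Set R} (x : ℕ → Frac H S) : R :=
  H.g (fun j => if j < m then (((x j).out).2 : R) else H.one)

theorem denomF_mem (H : KrasnerHyperring R m n) {S : Set R} (hS : H.IsMultSubset S)
    (h1 : H.one ∈ S) (x : ℕ → Frac H S) : H.denomF x ∈ S := by
  refine hS _ (fun j _ => ?_)
  by_cases h : j < m <;> simp only [h, if_true, if_false]
  · exact ((x j).out).2.property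
  · exact h1

/-- The `m`-ary hyperaddition on `S⁻¹R`:
`F(r_1/s_1,...,r_m/s_m) = f(g(r_1,s_2,...,s_m,1^(n-m)),...,g(s_1,...,s_{m-1},r_m,1^(n-m))) / g(s_1,...,s_m,1^(n-m))`. -/
noncomputable def fracF (H : KrasnerHyperring R m n) {S : Set R} (hS : H.IsMultSubset S)
    (h1 : H.one ∈ S) (x : ℕ → Frac H S) : Set (Frac H S) :=
  {q | ∃ u ∈ H.f (fun k => H.g (fun j =>
      if j = k then ((x k).out).1 else if j < m then (((x j).out).2 : R) else H.one)),
    q = H.mkFrac S u (H.denomF x) (H.denomF_mem hS h1 x)}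

/-- The negative of a fraction. -/
noncomputable def fracNeg (H : KrasnerHyperring R m n) {S : Set R} (q : Frac H S) : Frac H S :=
  H.mkFrac S (H.neg q.out.1) (q.out.2 : R) q.out.2.property

/-- Hyperideals of a Krasner `(m,n)`-hyperring. -/
def IsHyperideal (H : KrasnerHyperring R m n) (I : Set R) : Prop :=
  H.zero ∈ I ∧ (∀ x : ℕ → R, (∀ i, i < m → x i ∈ I) → H.f x ⊆ I) ∧
    (∀ a ∈ I, H.neg a ∈ I) ∧
    (∀ (x : ℕ → R) (i : ℕ), i < n → x i ∈ I → H.g x ∈ I)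

/-- The localization `S⁻¹I = {a/s : a ∈ I, s ∈ S}` of a hyperideal. -/
def locIdeal (H : KrasnerHyperring R m n) (S I : Set R) : Set (Frac H S) :=
  {q | ∃ a ∈ I, ∃ s, ∃ hs : s ∈ S, q = H.mkFrac S a s hs}

/-- `n`-ary prime hyperideals. -/
def IsPrimeHyperideal (H : KrasnerHyperring R m n) (P : Set R) : Prop :=
  H.IsHyperideal P ∧ P ≠ Set.univ ∧ ∀ x : ℕ → R, H.g x ∈ P → ∃ i, i < n ∧ x i ∈ P

/-- The radical of a hyperideal: the intersection of all `n`-ary prime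
hyperideals containing it (`R` if there are none). -/
def radical (H : KrasnerHyperring R m n) (I : Set R) : Set R :=
  ⋂₀ {P | H.IsPrimeHyperideal P ∧ I ⊆ P}

/-- `n`-ary primary hyperideals. -/
def IsPrimaryHyperideal (H : KrasnerHyperring R m n) (Q : Set R) : Prop :=
  H.IsHyperideal Q ∧ Q ≠ Set.univ ∧
    ∀ x : ℕ → R, H.g x ∈ Q → ∀ i, i < n → x i ∉ Q →
      H.g (Function.update x i H.one) ∈ H.radical Q

/-- `n`-ary hyperintegral domains. -/
def IsHyperDomain (H : KrasnerHyperring R m n) : Prop :=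
  ∀ x : ℕ → R, H.g x = H.zero → ∃ i, i < n ∧ x i = H.zero

/-- Hyperideals of the hyperring of fractions `S⁻¹R`. -/
def IsFracHyperideal (H : KrasnerHyperring R m n) {S : Set R} (hS : H.IsMultSubset S)
    (h1 : H.one ∈ S) (J : Set (Frac H S)) : Prop :=
  H.zeroFrac h1 ∈ J ∧ (∀ x : ℕ → Frac H S, (∀ i, i < m → x i ∈ J) → H.fracF hS h1 x ⊆ J) ∧
    (∀ q ∈ J, H.fracNeg q ∈ J) ∧
    (∀ (x : ℕ → Frac H S) (i : ℕ), i < n → x i ∈ J → H.fracG hS x ∈ J)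

/-- `n`-ary prime hyperideals of `S⁻¹R`. -/
def IsFracPrime (H : KrasnerHyperring R m n) {S : Set R} (hS : H.IsMultSubset S)
    (h1 : H.one ∈ S) (P : Set (Frac H S)) : Prop :=
  H.IsFracHyperideal hS h1 P ∧ P ≠ Set.univ ∧
    ∀ x : ℕ → Frac H S, H.fracG hS x ∈ P → ∃ i, i < n ∧ x i ∈ P

/-- Maximal hyperideals of `S⁻¹R`. -/
def IsFracMaximal (H : KrasnerHyperring R m n) {S : Set R} (hS : H.IsMultSubset S)
    (h1 : H.one ∈ S) (M : Set (Frac H S)) : Prop :=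
  H.IsFracHyperideal hS h1 M ∧ M ≠ Set.univ ∧
    ∀ J : Set (Frac H S), H.IsFracHyperideal hS h1 J → M ⊆ J → J = M ∨ J = Set.univ

/-- The radical of a hyperideal of `S⁻¹R`. -/
def fracRadical (H : KrasnerHyperring R m n) {S : Set R} (hS : H.IsMultSubset S)
    (h1 : H.one ∈ S) (J : Set (Frac H S)) : Set (Frac H S) :=
  ⋂₀ {P | H.IsFracPrime hS h1 P ∧ J ⊆ P}

/-- `n`-ary primary hyperideals of `S⁻¹R`. -/
def IsFracPrimary (H : KrasnerHyperring R m n) {S : Set R} (hS : H.IsMultSubset S)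
    (h1 : H.one ∈ S) (Q : Set (Frac H S)) : Prop :=
  H.IsFracHyperideal hS h1 Q ∧ Q ≠ Set.univ ∧
    ∀ x : ℕ → Frac H S, H.fracG hS x ∈ Q → ∀ i, i < n → x i ∉ Q →
      H.fracG hS (Function.update x i (H.oneFrac h1)) ∈ H.fracRadical hS h1 Q

/-- Homomorphisms of Krasner `(m,n)`-hyperrings. -/
def IsHom {R2 : Type v} (H : KrasnerHyperring R m n) (H2 : KrasnerHyperring R2 m n)
    (k : R → R2) : Prop :=
  (∀ x : ℕ → R, k '' (H.f x) = H2.f (k ∘ x)) ∧ (∀ x : ℕ → R, k (H.g x) = H2.g (k ∘ x))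

/-- Homomorphisms from `S⁻¹R` to a Krasner `(m,n)`-hyperring. -/
def IsFracHom {R2 : Type v} (H : KrasnerHyperring R m n) {S : Set R} (hS : H.IsMultSubset S)
    (h1 : H.one ∈ S) (H2 : KrasnerHyperring R2 m n) (h : Frac H S → R2) : Prop :=
  (∀ x : ℕ → Frac H S, h '' (H.fracF hS h1 x) = H2.f (h ∘ x)) ∧
    (∀ x : ℕ → Frac H S, h (H.fracG hS x) = H2.g (h ∘ x))

/-- The coset `f(r, I, 0^(m-2))` in the quotient `R/I`. -/
def quotCoset (H : KrasnerHyperring R m n) (I : Set R) (r : R) : Set R :=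
  setExt H.f (fun i => if i = 0 then {r} else if i = 1 then I else {H.zero})

end KrasnerHyperring

namespace KrasnerHyperring

variable {R : Type u} {m n : ℕ} (H : KrasnerHyperring R m n)

lemma g2_comm (a b : R) : H.g2 a b = H.g2 b a := by
  have hn := H.hn
  have h := H.g_comm (fun i => if i = 0 then b else if i = 1 then a else H.one)
    (Equiv.swap 0 1)
    (fun i hi => Equiv.swap_apply_of_ne_of_ne (by omega) (by omega))
  unfold g2
  rw [← h]
  congr 1
  funext i
  by_cases h0 : i = 0
  · subst h0; simp
  by_cases h1 : i = 1
  · subst h1; simp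
  · simp [Function.comp, Equiv.swap_apply_of_ne_of_ne h0 h1, h0, h1]

lemma g2_one_right (a : R) : H.g2 a H.one = a := by
  have h : (fun i => if i = 0 then a else if i = 1 then H.one else H.one)
      = (fun i => if i = 0 then a else H.one) := by
    funext i; by_cases h0 : i = 0 <;> simp [h0]
  unfold g2
  rw [h]
  exact H.g_one a

lemma g_single_pair (a b : R) (i : ℕ) (h1i : 1 ≤ i) (hin : i < n) :
    H.g (fun l => if l = 0 then a else if l = i then b else H.one) = H.g2 a b := by
  have hn := H.hn
  have h := H.g_comm (fun l => if l = 0 then a else if l = 1 then b else H.one)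
    (Equiv.swap 1 i)
    (fun l hl => Equiv.swap_apply_of_ne_of_ne (by omega) (by omega))
  unfold g2
  rw [← h]
  congr 1
  funext l
  show (if l = 0 then a else if l = i then b else H.one)
    = (fun l => if l = 0 then a else if l = 1 then b else H.one) (Equiv.swap 1 i l)
  by_cases hl0 : l = 0
  · subst hl0
    rw [Equiv.swap_apply_of_ne_of_ne (by omega) (by omega)]
    rfl
  by_cases hli : l = i
  · subst hli
    rw [Equiv.swap_apply_right]
    show (if l = 0 then a else if l = l then b else H.one) = b
    rw [if_neg hl0, if_pos rfl]
  by_cases hl1 : l = 1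
  · subst hl1
    rw [Equiv.swap_apply_left]
    show (if (1:ℕ) = 0 then a else if 1 = i then b else H.one)
      = if i = 0 then a else if i = 1 then b else H.one
    rw [if_neg (by omega : ¬ (1:ℕ) = 0), if_neg hli, if_neg (by omega : ¬ i = 0),
      if_neg (fun hh => hli hh.symm)]
  · rw [Equiv.swap_apply_of_ne_of_ne hl1 hli]
    show (if l = 0 then a else if l = i then b else H.one)
      = if l = 0 then a else if l = 1 then b else H.one
    rw [if_neg hl0, if_neg hl0, if_neg hli, if_neg hl1]

lemma g2_assoc (a b c : R) : H.g2 (H.g2 a b) c = H.g2 a (H.g2 b c) := by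
  have hn := H.hn
  set z : ℕ → R := fun k =>
    if k = 0 then a else if k = 1 then b else if k = n then c else H.one with hz
  have h := H.g_assoc z 0 1 (by omega) (by omega)
  have hz0 : z 0 = a := rfl
  have hz1 : z 1 = b := rfl
  have hzn : z n = c := by
    rw [hz]; show (if n = 0 then a else if n = 1 then b else if n = n then c else H.one) = c
    rw [if_neg (by omega : ¬ n = 0), if_neg (by omega : ¬ n = 1), if_pos rfl]
  have hzo : ∀ k, k ≠ 0 → k ≠ 1 → k ≠ n → z k = H.one := by
    intro k k0 k1 kn
    rw [hz]; show (if k = 0 then a else if k = 1 then b else if k = n then c else H.one) = H.one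
    rw [if_neg k0, if_neg k1, if_neg kn]
  have hinner0 : H.g (fun l => z (0 + l)) = H.g2 a b := by
    apply H.g_congr
    intro l hl
    show z (0 + l) = if l = 0 then a else if l = 1 then b else H.one
    rw [Nat.zero_add]
    by_cases l0 : l = 0
    · subst l0; rw [if_pos rfl]; exact hz0
    by_cases l1 : l = 1
    · subst l1; rw [if_neg l0, if_pos rfl]; exact hz1
    · rw [if_neg l0, if_neg l1]; exact hzo l l0 l1 (by omega)
  have hinner1 : H.g (fun l => z (1 + l)) = H.g2 b c := by
    have heq : H.g (fun l => z (1 + l)) =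
        H.g (fun l => if l = 0 then b else if l = n - 1 then c else H.one) := by
      apply H.g_congr
      intro l hl
      by_cases l0 : l = 0
      · subst l0; rw [if_pos rfl]; exact hz1
      by_cases ln : l = n - 1
      · rw [if_neg l0, if_pos ln]
        have : 1 + l = n := by omega
        rw [this]; exact hzn
      · rw [if_neg l0, if_neg ln]
        exact hzo _ (by omega) (by omega) (by omega)
    rw [heq]
    exact H.g_single_pair b c (n - 1) (by omega) (by omega)
  have hL : H.g (fun k => if k < 0 then z k else if k = 0 then H.g (fun l => z (0 + l))
      else z (k + n - 1)) = H.g2 (H.g2 a b) c := by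
    unfold g2
    apply H.g_congr
    intro i hi
    rw [if_neg (Nat.not_lt_zero i)]
    by_cases h0 : i = 0
    · rw [if_pos h0, if_pos h0]
      exact hinner0
    rw [if_neg h0, if_neg h0]
    by_cases h1 : i = 1
    · rw [if_pos h1]
      subst h1
      have : 1 + n - 1 = n := by omega
      rw [this]; exact hzn
    · rw [if_neg h1]
      exact hzo _ (by omega) (by omega) (by omega)
  have hR : H.g (fun k => if k < 1 then z k else if k = 1 then H.g (fun l => z (1 + l))
      else z (k + n - 1)) = H.g2 a (H.g2 b c) := by
    unfold g2
    apply H.g_congr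
    intro i hi
    by_cases h0 : i = 0
    · subst h0
      rw [if_pos (by omega : (0:ℕ) < 1), if_pos rfl]
      exact hz0
    rw [if_neg (by omega : ¬ i < 1), if_neg h0]
    by_cases h1 : i = 1
    · rw [if_pos h1, if_pos h1]
      exact hinner1
    · rw [if_neg h1, if_neg h1]
      exact hzo _ (by omega) (by omega) (by omega)
  rw [hL, hR] at h
  exact h

/-- `R` with `g2` and `one` is a commutative monoid. -/
def M : CommMonoid R where
  mul := H.g2
  one := H.one
  mul_assoc := H.g2_assoc
  one_mul a := (H.g2_comm H.one a).trans (H.g2_one_right a)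
  mul_one := H.g2_one_right
  mul_comm := H.g2_comm

lemma g2_zero_right (a : R) : H.g2 a H.zero = H.zero :=
  H.g_zero _ 1 (by have := H.hn; omega) (by simp [g2])

lemma g2_zero_left (a : R) : H.g2 H.zero a = H.zero :=
  H.g_zero _ 0 (by have := H.hn; omega) (by simp [g2])

lemma neg_zero' : H.neg H.zero = H.zero := by
  have h : (fun i => if i = 0 then H.zero else if i = 1 then H.zero else H.zero)
      = (fun i => if i = 0 then H.zero else H.zero) := by
    funext i; by_cases h0 : i = 0 <;> simp [h0]
  refine (H.neg_unique H.zero H.zero ?_).symm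
  rw [h, H.f_zero]
  rfl

lemma neg_neg' (x : R) : H.neg (H.neg x) = x := by
  have hm := H.hm
  have hc := H.f_comm (fun i => if i = 0 then x else if i = 1 then H.neg x else H.zero)
    (Equiv.swap 0 1)
    (fun i hi => Equiv.swap_apply_of_ne_of_ne (by omega) (by omega))
  have hfn : ((fun i => if i = 0 then x else if i = 1 then H.neg x else H.zero) ∘ Equiv.swap 0 1)
      = (fun i => if i = 0 then H.neg x else if i = 1 then x else H.zero) := by
    funext i
    by_cases h0 : i = 0
    · subst h0; simp
    by_cases h1 : i = 1
    · subst h1; simp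
    · simp [Function.comp, Equiv.swap_apply_of_ne_of_ne h0 h1, h0, h1]
  refine (H.neg_unique (H.neg x) x ?_).symm
  rw [hfn] at hc
  rw [hc]
  exact H.neg_mem x

lemma f_snd_singleton (e : R) :
    H.f (fun i => if i = 0 then H.zero else if i = 1 then e else H.zero) = {e} := by
  have hm := H.hm
  have hc := H.f_comm (fun i => if i = 0 then e else if i = 1 then H.zero else H.zero)
    (Equiv.swap 0 1)
    (fun i hi => Equiv.swap_apply_of_ne_of_ne (by omega) (by omega))
  have hfn : ((fun i => if i = 0 then e else if i = 1 then H.zero else H.zero) ∘ Equiv.swap 0 1)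
      = (fun i => if i = 0 then H.zero else if i = 1 then e else H.zero) := by
    funext i
    by_cases h0 : i = 0
    · subst h0; simp
    by_cases h1 : i = 1
    · subst h1; simp
    · simp [Function.comp, Equiv.swap_apply_of_ne_of_ne h0 h1, h0, h1]
  rw [hfn] at hc
  rw [hc]
  have h2 : (fun i => if i = 0 then e else if i = 1 then H.zero else H.zero)
      = (fun i => if i = 0 then e else H.zero) := by
    funext i; by_cases h0 : i = 0 <;> simp [h0]
  rw [h2]
  exact H.f_zero e

lemma zero_mem_fracMix {r s' r' s : R} (h : H.g2 r s' = H.g2 r' s) :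
    H.zero ∈ H.fracMix r s' r' s := by
  unfold fracMix
  rw [h]
  exact H.neg_mem (H.g2 r' s)

/-- Key cancellation consequence of the fraction relation. -/
lemma mul_eq_of_fracMix {r s' r' s w u : R} (hu : u ∈ H.fracMix r s' r' s)
    (hwu : H.g2 w u = H.zero) : H.g2 w (H.g2 r s') = H.g2 w (H.g2 r' s) := by
  have hm := H.hm
  have hn := H.hn
  have hc := H.canonical u _ hu 0 (by omega)
  have hfn : (fun j => if j = 0 then u else
      H.neg ((fun i => if i = 0 then H.g2 r s' else if i = 1 then H.neg (H.g2 r' s)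
        else H.zero) j))
      = (fun j => if j = 0 then u else if j = 1 then H.g2 r' s else H.zero) := by
    funext j
    by_cases j0 : j = 0
    · simp [j0]
    by_cases j1 : j = 1
    · simp [j0, j1, H.neg_neg']
    · simp [j0, j1, H.neg_zero']
  rw [hfn] at hc
  replace hc : H.g2 r s' ∈
      H.f (fun j => if j = 0 then u else if j = 1 then H.g2 r' s else H.zero) := hc
  have hd := H.distrib (fun j => if j = 0 then u else if j = 1 then H.g2 r' s else H.zero)
    (fun j => if j = 1 then w else H.one)
  have hg : ∀ v : R, H.g (fun j => if j = 0 then v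
      else (fun j => if j = 1 then w else H.one) j) = H.g2 v w := by
    intro v
    apply H.g_congr
    intro j hj
    show (if j = 0 then v else if j = 1 then w else H.one)
      = if j = 0 then v else if j = 1 then w else H.one
    rfl
  have hmem : H.g2 (H.g2 r s') w ∈
      H.f (fun k => H.g (fun j => if j = 0 then
        (if k = 0 then u else if k = 1 then H.g2 r' s else H.zero)
        else (fun j => if j = 1 then w else H.one) j)) := by
    rw [← hd]
    exact ⟨H.g2 r s', hc, rfl⟩
  have hfn2 : (fun k => H.g (fun j => if j = 0 then
        (if k = 0 then u else if k = 1 then H.g2 r' s else H.zero)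
        else (fun j => if j = 1 then w else H.one) j))
      = (fun k => if k = 0 then H.zero else if k = 1 then H.g2 (H.g2 r' s) w else H.zero) := by
    funext k
    by_cases k0 : k = 0
    · subst k0
      show H.g (fun j => if j = 0 then u
        else (fun j => if j = 1 then w else H.one) j) = H.zero
      rw [hg u, H.g2_comm]
      exact hwu
    by_cases k1 : k = 1
    · subst k1
      show H.g (fun j => if j = 0 then H.g2 r' s
        else (fun j => if j = 1 then w else H.one) j) = H.g2 (H.g2 r' s) w
      exact hg _
    · rw [if_neg k0, if_neg k1, if_neg k0, if_neg k1]
      rw [hg H.zero]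
      exact H.g2_zero_left w
  rw [hfn2, H.f_snd_singleton] at hmem
  rw [H.g2_comm w (H.g2 r s'), H.g2_comm w (H.g2 r' s)]
  exact hmem

lemma g2_mem_S {S : Set R} (hS : H.IsMultSubset S) (h1 : H.one ∈ S) {a b : R}
    (ha : a ∈ S) (hb : b ∈ S) : H.g2 a b ∈ S := by
  refine hS _ (fun i hi => ?_)
  by_cases h0 : i = 0
  · simpa [h0] using ha
  by_cases hb1 : i = 1
  · simpa [h0, hb1] using hb
  · simpa [h0, hb1] using h1

lemma g2_mem_I_left {I : Set R} (hI : H.IsHyperideal I) {a : R} (b : R) (ha : a ∈ I) :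
    H.g2 a b ∈ I :=
  hI.2.2.2 _ 0 (by have := H.hn; omega) (by simpa [g2] using ha)

lemma g2_mem_I_right {I : Set R} (hI : H.IsHyperideal I) (a : R) {b : R} (hb : b ∈ I) :
    H.g2 a b ∈ I :=
  hI.2.2.2 _ 1 (by have := H.hn; omega) (by simpa [g2] using hb)

lemma pfun_imp {S I : Set R} (hS : H.IsMultSubset S) (h1 : H.one ∈ S) (hI : H.IsHyperideal I)
    {r s r' s' w : R} (hwS : w ∈ S) (hsS : s ∈ S) (hs'S : s' ∈ S)
    (heq : H.g2 w (H.g2 r s') = H.g2 w (H.g2 r' s)) :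
    (∃ t ∈ S, H.g2 t r ∈ I) → (∃ t ∈ S, H.g2 t r' ∈ I) := by
  rintro ⟨t, htS, htI⟩
  refine ⟨H.g2 (H.g2 w t) s, H.g2_mem_S hS h1 (H.g2_mem_S hS h1 hwS htS) hsS, ?_⟩
  letI := H.M
  have e1 : H.g2 (H.g2 (H.g2 w t) s) r' = H.g2 t (H.g2 w (H.g2 r' s)) := by
    show ((w * t) * s) * r' = t * (w * (r' * s))
    ac_rfl
  have e2 : H.g2 t (H.g2 w (H.g2 r s')) = H.g2 (H.g2 t r) (H.g2 w s') := by
    show t * (w * (r * s')) = (t * r) * (w * s')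
    ac_rfl
  rw [e1, ← heq, e2]
  exact H.g2_mem_I_left hI _ htI

end KrasnerHyperring

/-- for a hyperideal `I` of `R`, `S⁻¹I = S⁻¹R` iff `I ∩ S ≠ ∅`. -/
theorem locIdeal_eq_univ_iff {R : Type u} {m n : ℕ} (H : KrasnerHyperring R m n) (S : Set R)
    (hS : H.IsMultSubset S) (h1 : H.one ∈ S) (I : Set R) (hI : H.IsHyperideal I) :
    H.locIdeal S I = Set.univ ↔ (I ∩ S).Nonempty := by
  constructor
  · intro h
    have hmem : H.mkFrac S H.one H.one h1 ∈ H.locIdeal S I := by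
      rw [h]; exact Set.mem_univ _
    obtain ⟨a, haI, s, hs, heq⟩ := hmem
    have hsound : ∀ p q : R × S, H.FracRel S p q →
        (∃ t ∈ S, H.g2 t p.1 ∈ I) = (∃ t ∈ S, H.g2 t q.1 ∈ I) := by
      rintro p q ⟨w, hwS, u, hu, hwu⟩
      have key := H.mul_eq_of_fracMix hu hwu
      exact propext ⟨H.pfun_imp hS h1 hI hwS p.2.property q.2.property key,
        H.pfun_imp hS h1 hI hwS q.2.property p.2.property key.symm⟩
    have hPa : Quot.lift (fun p : R × S => ∃ t ∈ S, H.g2 t p.1 ∈ I) hsound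
        (H.mkFrac S a s hs) :=
      show ∃ t ∈ S, H.g2 t a ∈ I from ⟨H.one, h1, H.g2_mem_I_right hI _ haI⟩
    rw [← heq] at hPa
    replace hPa : ∃ t ∈ S, H.g2 t H.one ∈ I := hPa
    obtain ⟨t, htS, htI⟩ := hPa
    rw [H.g2_one_right] at htI
    exact ⟨t, htI, htS⟩
  · rintro ⟨t, htI, htS⟩
    apply Set.eq_univ_iff_forall.mpr
    intro q
    induction q using Quot.ind with
    | _ p =>
      obtain ⟨r, s, hs⟩ := p
      refine ⟨H.g2 t r, H.g2_mem_I_left hI _ htI, H.g2 t s, H.g2_mem_S hS h1 htS hs, ?_⟩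
      apply Quot.sound
      refine ⟨H.one, h1, H.zero, ?_, ?_⟩
      · apply H.zero_mem_fracMix
        letI := H.M
        show r * (t * s) = (t * r) * s
        ac_rfl
      · exact H.g2_zero_right H.one
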